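/- In the anti-coordination game, for any Nash equilibrium x*, the fraction z* = z(x*) of players playing +1 satisfies G_a((n/(n−1))(z* − ε)) ≥ z* ≥ G_a((n/(n−1))z*) for every ε ∈ (1/n, 2/n]. Conversely, for any z* ∈ {0, 1/n, …, 1} satisfying these inequalities there exists a Nash equilibrium x* with z(x*) = z*. -/

import Mathlib

open Finset

/-- Anti-coordination game utility, with weights d_i = 2(n−1)(r_i − 1/2). -/
noncomputable def antiCoordU {n : ℕ} (r : Fin n → ℝ) (i : Fin n) (x : Fin n → ℝ) : ℝ :=
  -(∑ j ∈ Finset.univ.erase i, x i * x j - (2 * ((n : ℝ) - 1) * (r i - 1/2)) * x i)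

/-- Threshold CCDF. -/
noncomputable def Ga {n : ℕ} (r : Fin n → ℝ) (z : ℝ) : ℝ :=
  ({i : Fin n | r i > z}.ncard : ℝ) / n

/-- Fraction of players at +1. -/
noncomputable def zfrac (n : ℕ) (x : Fin n → ℝ) : ℝ :=
  ({i : Fin n | x i = 1}.ncard : ℝ) / n

/-
With `k` players at `+1`, comparing a player's two payoffs reduces to comparing its threshold
with `(k-1)/(n-1)` if it plays `+1` and with `k/(n-1)` if it plays `-1`. So the equilibria whose
`+1`-set `C` has size `k` are those with `{i | k/(n-1) < r i} ⊆ C ⊆ {i | (k-1)/(n-1) ≤ r i}`,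
and such a `C` exists iff the smaller set has at most `k` and the larger at least `k` elements.
These two counts are the two inequalities: as `ε` runs over `(1/n, 2/n]`, the point
`(n/(n-1))(k/n - ε)` runs over `[(k-2)/(n-1), (k-1)/(n-1))`, and since there are finitely many
thresholds, `#{i | t < r i} ≥ k` for all such `t` amounts to `#{i | (k-1)/(n-1) ≤ r i} ≥ k`.
-/

open Filter Topology

lemma eventually_nhdsLT_forall_lt_iff_le {ι : Type*} [Finite ι] (r : ι → ℝ) (c : ℝ) :
    ∀ᶠ t in 𝓝[<] c, ∀ i, t < r i ↔ c ≤ r i := by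
  refine eventually_all.2 fun i => ?_
  rcases le_or_gt c (r i) with hi | hi
  · filter_upwards [self_mem_nhdsWithin] with t (ht : t < c)
    exact iff_of_true (ht.trans_le hi) hi
  · filter_upwards [Ioo_mem_nhdsLT hi] with t ht
    exact iff_of_false ht.1.le.not_gt hi.not_ge

lemma forall_Ico_le_card_filter_lt_iff {ι : Type*} [Fintype ι] (r : ι → ℝ) {a c : ℝ}
    (hac : a < c) (m : ℕ) :
    (∀ t ∈ Set.Ico a c, m ≤ #{i | t < r i}) ↔ m ≤ #{i | c ≤ r i} := by
  constructor
  · intro h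
    obtain ⟨t, hrt, hat, htc⟩ :=
      ((eventually_nhdsLT_forall_lt_iff_le r c).and (Ioo_mem_nhdsLT hac)).exists
    simpa only [hrt] using h t ⟨hat.le, htc⟩
  · intro h t ⟨_, htc⟩
    exact h.trans <| card_le_card <| monotone_filter_right _ fun _ _ => htc.trans_le

lemma forall_mem_Ioc_iff_forall_mem_Ico {a : ℝ} (ha : 1 < a) (k : ℝ) (P : ℝ → Prop) :
    (∀ ε : ℝ, 1 / a < ε → ε ≤ 2 / a → P (a / (a - 1) * (k / a - ε))) ↔
      ∀ t ∈ Set.Ico ((k - 2) / (a - 1)) ((k - 1) / (a - 1)), P t := by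
  have ha0 : 0 < a := by linarith
  have ha1 : 0 < a - 1 := by linarith
  have hφ : ∀ ε, a / (a - 1) * (k / a - ε) = (k - a * ε) / (a - 1) := fun ε => by
    field_simp
  simp only [hφ, Set.mem_Ico, div_le_iff₀ ha1, lt_div_iff₀ ha1, div_lt_iff₀ ha0, le_div_iff₀ ha0]
  constructor
  · rintro h t ⟨h1, h2⟩
    have hε : (k - a * ((k - (a - 1) * t) / a)) / (a - 1) = t := by
      field_simp
      ring
    have hεa : (k - (a - 1) * t) / a * a = k - (a - 1) * t := div_mul_cancel₀ _ ha0.ne'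
    exact hε ▸ h _ (by linarith) (by linarith)
  · intro h ε h1 h2
    have hta : (k - a * ε) / (a - 1) * (a - 1) = k - a * ε := div_mul_cancel₀ _ ha1.ne'
    exact h _ ⟨by linarith, by linarith⟩

section AntiCoordination

variable {n : ℕ} (r : Fin n → ℝ)

def IsAntiCoordNash (x : Fin n → ℝ) : Prop :=
  ∀ (i : Fin n) (y : ℝ), (y = 1 ∨ y = -1) →
    antiCoordU r i (Function.update x i y) ≤ antiCoordU r i x

def signProfile (C : Finset (Fin n)) (i : Fin n) : ℝ :=
  if i ∈ C then 1 else -1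

noncomputable def mustPlayPlus (k : ℕ) : Finset (Fin n) :=
  {i | (k : ℝ) / ((n : ℝ) - 1) < r i}

noncomputable def mayPlayPlus (k : ℕ) : Finset (Fin n) :=
  {i | ((k : ℝ) - 1) / ((n : ℝ) - 1) ≤ r i}

lemma signProfile_of_mem {C : Finset (Fin n)} {i : Fin n} (hi : i ∈ C) :
    signProfile C i = 1 :=
  if_pos hi

lemma signProfile_of_notMem {C : Finset (Fin n)} {i : Fin n} (hi : i ∉ C) :
    signProfile C i = -1 :=
  if_neg hi

lemma signProfile_eq_one_or_eq_neg_one (C : Finset (Fin n)) (i : Fin n) :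
    signProfile C i = 1 ∨ signProfile C i = -1 := by
  by_cases hi : i ∈ C
  · exact .inl (signProfile_of_mem hi)
  · exact .inr (signProfile_of_notMem hi)

lemma signProfile_eq_one_iff {C : Finset (Fin n)} {i : Fin n} : signProfile C i = 1 ↔ i ∈ C := by
  by_cases hi : i ∈ C
  · simp [signProfile_of_mem hi, hi]
  · norm_num [signProfile_of_notMem hi, hi]

lemma exists_eq_signProfile {x : Fin n → ℝ} (hx : ∀ i, x i = 1 ∨ x i = -1) :
    ∃ C, x = signProfile C := by
  refine ⟨({i | x i = 1} : Finset (Fin n)), funext fun i => ?_⟩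
  rcases hx i with h | h
  · rw [h, signProfile_of_mem (by simpa using h)]
  · rw [h, signProfile_of_notMem (by norm_num [h])]

lemma sum_signProfile (C : Finset (Fin n)) : ∑ j, signProfile C j = 2 * #C - n := by
  have hcard : (#C : ℝ) + #Cᶜ = n := by
    exact_mod_cast (card_add_card_compl C).trans (Fintype.card_fin n)
  rw [← sum_add_sum_compl C, sum_congr rfl fun i => signProfile_of_mem,
    sum_congr rfl fun i hi => signProfile_of_notMem (mem_compl.1 hi)]
  simp only [sum_const, nsmul_eq_mul, mul_one, mul_neg]
  linarith

lemma zfrac_signProfile (C : Finset (Fin n)) : zfrac n (signProfile C) = #C / n := by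
  have hC : {i | signProfile C i = 1} = (C : Set (Fin n)) := Set.ext fun _ => signProfile_eq_one_iff
  rw [zfrac, hC, Set.ncard_coe_finset]

lemma antiCoordU_update_sub (x : Fin n → ℝ) (i : Fin n) (y : ℝ) :
    antiCoordU r i (Function.update x i y) - antiCoordU r i x
      = (x i - y) * (∑ j, x j - x i - 2 * ((n : ℝ) - 1) * (r i - 1/2)) := by
  have hsum : ∀ z : Fin n → ℝ, ∑ j ∈ univ.erase i, z j = ∑ j, z j - z i := fun z =>
    sum_erase_eq_sub (mem_univ i)
  have hupd : ∑ j ∈ univ.erase i, Function.update x i y j = ∑ j ∈ univ.erase i, x j :=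
    sum_congr rfl fun j hj => Function.update_of_ne (ne_of_mem_erase hj) _ _
  rw [antiCoordU, antiCoordU, ← mul_sum, ← mul_sum, hupd, Function.update_self, hsum]
  ring

lemma mustPlayPlus_subset_mayPlayPlus (hn : 1 < n) (k : ℕ) :
    mustPlayPlus r k ⊆ mayPlayPlus r k := by
  have hn' : (0 : ℝ) < n - 1 := by norm_num [hn]
  refine monotone_filter_right _ fun i _ hi => le_trans ?_ hi.le
  gcongr
  linarith

lemma isAntiCoordNash_signProfile_iff (hn : 1 < n) (C : Finset (Fin n)) :
    IsAntiCoordNash r (signProfile C) ↔ mustPlayPlus r #C ⊆ C ∧ C ⊆ mayPlayPlus r #C := by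
  have hn' : (0 : ℝ) < n - 1 := by norm_num [hn]
  simp only [IsAntiCoordNash, ← sub_nonpos (b := antiCoordU r _ (signProfile C)),
    antiCoordU_update_sub, sum_signProfile, subset_iff, mustPlayPlus, mayPlayPlus, mem_filter,
    mem_univ, true_and, div_lt_iff₀ hn', div_le_iff₀ hn']
  constructor
  · intro h
    refine ⟨fun i hi => by_contra fun hC => ?_, fun i hC => ?_⟩
    · have := h i 1 (.inl rfl)
      rw [signProfile_of_notMem hC] at this
      linarith
    · have := h i (-1) (.inr rfl)
      rw [signProfile_of_mem hC] at this
      linarith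
  · rintro ⟨hAC, hCB⟩ i y hy
    by_cases hC : i ∈ C
    · have := hCB hC
      rw [signProfile_of_mem hC]
      rcases hy with rfl | rfl <;> linarith
    · have := mt (@hAC i) hC
      rw [signProfile_of_notMem hC]
      rcases hy with rfl | rfl <;> linarith

lemma Ga_eq_card_div (z : ℝ) : Ga r z = #{i | z < r i} / n := by
  rw [Ga, Set.ncard_eq_toFinset_card', Set.toFinset_ofPred]

lemma div_le_Ga_iff (hn : 0 < n) (k : ℕ) (z : ℝ) :
    (k : ℝ) / n ≤ Ga r z ↔ k ≤ #{i | z < r i} := by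
  rw [Ga_eq_card_div, div_le_div_iff_of_pos_right (by positivity), Nat.cast_le]

lemma Ga_le_div_iff (hn : 0 < n) (k : ℕ) (z : ℝ) :
    Ga r z ≤ (k : ℝ) / n ↔ #{i | z < r i} ≤ k := by
  rw [Ga_eq_card_div, div_le_div_iff_of_pos_right (by positivity), Nat.cast_le]

lemma nashFraction_conditions_iff (hn : 1 < n) (k : ℕ) :
    (∀ ε : ℝ, 1 / (n : ℝ) < ε → ε ≤ 2 / (n : ℝ) →
        Ga r (((n : ℝ) / ((n : ℝ) - 1)) * ((k : ℝ) / n - ε)) ≥ (k : ℝ) / n ∧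
        (k : ℝ) / n ≥ Ga r (((n : ℝ) / ((n : ℝ) - 1)) * ((k : ℝ) / n))) ↔
      #(mustPlayPlus r k) ≤ k ∧ k ≤ #(mayPlayPlus r k) := by
  have hn1 : (1 : ℝ) < n := by exact_mod_cast hn
  have hthreshold : (n : ℝ) / ((n : ℝ) - 1) * ((k : ℝ) / n) = k / ((n : ℝ) - 1) := by
    field_simp
  have hIco : ((k : ℝ) - 2) / ((n : ℝ) - 1) < ((k : ℝ) - 1) / ((n : ℝ) - 1) := by
    gcongr
    linarith
  simp only [ge_iff_le, hthreshold, div_le_Ga_iff r (zero_lt_one.trans hn),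
    Ga_le_div_iff r (zero_lt_one.trans hn)]
  constructor
  · intro h
    refine ⟨(h (2 / n) (by gcongr; norm_num) le_rfl).2, ?_⟩
    refine (forall_Ico_le_card_filter_lt_iff r hIco k).1 ?_
    exact (forall_mem_Ioc_iff_forall_mem_Ico hn1 k _).1 fun ε h1 h2 => (h ε h1 h2).1
  · rintro ⟨hA, hB⟩ ε h1 h2
    exact ⟨(forall_mem_Ioc_iff_forall_mem_Ico hn1 k _).2
      ((forall_Ico_le_card_filter_lt_iff r hIco k).2 hB) ε h1 h2, hA⟩

end AntiCoordination

/-- Nash equilibria of the anti-coordination game correspond exactly to the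
fractions z* ∈ {0,1/n,…,1} with G_a((n/(n−1))(z*−ε)) ≥ z* ≥ G_a((n/(n−1))z*)
for all ε ∈ (1/n, 2/n]. -/
theorem antiCoord_nash_fraction_characterization {n : ℕ} (hn : 2 ≤ n) (r : Fin n → ℝ) :
    (∀ x : Fin n → ℝ, (∀ i, x i = 1 ∨ x i = -1) →
      (∀ (i : Fin n) (y : ℝ), (y = 1 ∨ y = -1) →
        antiCoordU r i (Function.update x i y) ≤ antiCoordU r i x) →
      ∀ ε : ℝ, 1 / (n : ℝ) < ε → ε ≤ 2 / (n : ℝ) →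
        Ga r (((n : ℝ) / ((n : ℝ) - 1)) * (zfrac n x - ε)) ≥ zfrac n x ∧
        zfrac n x ≥ Ga r (((n : ℝ) / ((n : ℝ) - 1)) * zfrac n x)) ∧
    (∀ k : ℕ, k ≤ n →
      (∀ ε : ℝ, 1 / (n : ℝ) < ε → ε ≤ 2 / (n : ℝ) →
        Ga r (((n : ℝ) / ((n : ℝ) - 1)) * ((k : ℝ) / n - ε)) ≥ (k : ℝ) / n ∧
        (k : ℝ) / n ≥ Ga r (((n : ℝ) / ((n : ℝ) - 1)) * ((k : ℝ) / n))) →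
      ∃ x : Fin n → ℝ, (∀ i, x i = 1 ∨ x i = -1) ∧
        (∀ (i : Fin n) (y : ℝ), (y = 1 ∨ y = -1) →
          antiCoordU r i (Function.update x i y) ≤ antiCoordU r i x) ∧
        zfrac n x = (k : ℝ) / n) := by
  refine ⟨fun x hx hnash => ?_, fun k _ hcond => ?_⟩
  · obtain ⟨C, rfl⟩ := exists_eq_signProfile hx
    obtain ⟨hAC, hCB⟩ := (isAntiCoordNash_signProfile_iff r hn C).1 hnash
    rw [zfrac_signProfile]
    exact (nashFraction_conditions_iff r hn #C).2 ⟨card_le_card hAC, card_le_card hCB⟩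
  · obtain ⟨hA, hB⟩ := (nashFraction_conditions_iff r hn k).1 hcond
    obtain ⟨C, hAC, hCB, rfl⟩ :=
      exists_subsuperset_card_eq (mustPlayPlus_subset_mayPlayPlus r hn k) hA hB
    exact ⟨signProfile C, signProfile_eq_one_or_eq_neg_one C,
      (isAntiCoordNash_signProfile_iff r hn C).2 ⟨hAC, hCB⟩, zfrac_signProfile C⟩
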